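/- In the RNmatrix RM_{C_1}, the formula (p ∧ ¬p) ∧ ¬(p ∧ ¬p) is unsatisfiable: for every valuation ν ∈ F_{C_1}, ν((p ∧ ¬p) ∧ ¬(p ∧ ¬p)) = F. Consequently, the formula ((p ∧ ¬p) ∧ ¬(p ∧ ¬p)) → ¬¬p takes a designated value under every ν ∈ F_{C_1}. -/
import Mathlib


/-- Formulas over the signature Σ (¬ unary; ∧, ∨, → binary). -/
inductive PFs : Type
  | var : ℕ → PFs
  | neg : PFs → PFs
  | and : PFs → PFs → PFs
  | or : PFs → PFs → PFs
  | imp : PFs → PFs → PFs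

/-- The three truth-values `F`, `t`, `T`. -/
inductive V3 : Type
  | F | t | T

/-- Designated values `D = {t, T}`. -/
def D3 : Set V3 := {V3.t, V3.T}

/-- ¬̃ of `A_{C_1}` (the Σ-reduct of `A_Cila`). -/
def cNeg : V3 → Set V3
  | .F => {V3.T}
  | .t => {V3.t, V3.T}
  | .T => {V3.F}

/-- ∧̃ of `A_{C_1}`. -/
def cAnd : V3 → V3 → Set V3
  | .F, _ => {V3.F}
  | _, .F => {V3.F}
  | .T, .T => {V3.T}
  | _, _ => {V3.t, V3.T}

/-- ∨̃ of `A_{C_1}`. -/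
def cOr : V3 → V3 → Set V3
  | .F, .F => {V3.F}
  | .F, .T => {V3.T}
  | .T, .F => {V3.T}
  | .T, .T => {V3.T}
  | _, _ => {V3.t, V3.T}

/-- →̃ of `A_{C_1}`. -/
def cImp : V3 → V3 → Set V3
  | .F, .F => {V3.T}
  | .F, .T => {V3.T}
  | .t, .F => {V3.F}
  | .T, .F => {V3.F}
  | .T, .T => {V3.T}
  | _, _ => {V3.t, V3.T}

/-- `ν ∈ F_{C_1}`: a multialgebra homomorphism into `A_{C_1}` with
`ν(α) = t → ν(α ∧ ¬α) = T`. -/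
def FC1 (ν : PFs → V3) : Prop :=
  ((∀ α, ν (PFs.neg α) ∈ cNeg (ν α)) ∧
   (∀ α β, ν (PFs.and α β) ∈ cAnd (ν α) (ν β)) ∧
   (∀ α β, ν (PFs.or α β) ∈ cOr (ν α) (ν β)) ∧
   (∀ α β, ν (PFs.imp α β) ∈ cImp (ν α) (ν β))) ∧
  (∀ α, ν α = V3.t → ν (PFs.and α (PFs.neg α)) = V3.T)

/-- In `RM_{C_1}`, the formula `(p ∧ ¬p) ∧ ¬(p ∧ ¬p)` is
unsatisfiable (takes the value `F` under every `ν ∈ F_{C_1}`); consequently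
`((p ∧ ¬p) ∧ ¬(p ∧ ¬p)) → ¬¬p` takes a designated value under every
`ν ∈ F_{C_1}`. -/
theorem stmt_9 (v : ℕ) (ν : PFs → V3) (hν : FC1 ν) :
    (ν (((PFs.var v).and (PFs.var v).neg).and
        (((PFs.var v).and (PFs.var v).neg).neg)) = V3.F) ∧
    (ν ((((PFs.var v).and (PFs.var v).neg).and
        (((PFs.var v).and (PFs.var v).neg).neg)).imp
          ((PFs.var v).neg.neg)) ∈ D3) := by
  obtain ⟨⟨hneg, hand, _, himp⟩, hrn⟩ := hν
  set p := PFs.var v with hp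
  set α := p.and p.neg with hα
  have hF : ν (α.and α.neg) = V3.F := by
    cases h : ν p with
    | F =>
      have h1 := hand p p.neg
      rw [h] at h1
      simp only [cAnd, Set.mem_singleton_iff] at h1
      have h2 := hand α α.neg
      rw [h1] at h2
      simpa [cAnd] using h2
    | t =>
      have hT := hrn p h
      have h1 := hneg α
      rw [hT] at h1
      simp only [cNeg, Set.mem_singleton_iff] at h1
      have h2 := hand α α.neg
      rw [hT, h1] at h2
      simpa [cAnd] using h2
    | T =>
      have h1 := hneg p
      rw [h] at h1
      simp only [cNeg, Set.mem_singleton_iff] at h1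
      have h2 := hand p p.neg
      rw [h, h1] at h2
      simp only [cAnd, Set.mem_singleton_iff] at h2
      have h3 := hand α α.neg
      rw [h2] at h3
      simpa [cAnd] using h3
  refine ⟨hF, ?_⟩
  have h4 := himp (α.and α.neg) (p.neg.neg)
  rw [hF] at h4
  cases h5 : ν (p.neg.neg) <;> rw [h5] at h4 <;>
    simp only [cImp, Set.mem_singleton_iff, Set.mem_insert_iff] at h4 <;>
    simp [D3, h4]
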